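/- arXiv:0802.1654 — 6 statements merged into one kernel-verified Lean document; each statement's English description precedes it below -/
import Mathlib

section
/- If h : X × X* → ℝ∞ is convex and satisfies h(x,v) ≥ ⟨x,v⟩ for all (x,v), then the set T = {(x,v) : h(x,v) = ⟨x,v⟩} is a monotone operator, i.e., for all (x₁,v₁), (x₂,v₂) ∈ T, ⟨x₁ - x₂, v₁ - v₂⟩ ≥ 0. -/
open NormedSpace

/- The duality pairing is a quadratic form on `X × X*`, so its midpoint defect is a quarter of
the monotonicity expression; convexity of `h` and `h ≥ ⟨·,·⟩` with equality at `p`, `q` make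
that defect nonnegative. -/

section Coupling

variable {X : Type*} [AddCommGroup X] [Module ℝ X] [TopologicalSpace X]

lemma coupling_midpoint_defect (p q : X × StrongDual ℝ X) :
    (1 / 2) * p.2 p.1 + (1 / 2) * q.2 q.1
        - ((1 / 2 : ℝ) • p + (1 / 2 : ℝ) • q).2 ((1 / 2 : ℝ) • p + (1 / 2 : ℝ) • q).1
      = (1 / 4) * (p.2 - q.2) (p.1 - q.1) := by
  simp only [Prod.fst_add, Prod.snd_add, Prod.smul_fst, Prod.smul_snd, add_apply, smul_apply,
    sub_apply, map_add, map_sub, map_smul, smul_eq_mul]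
  ring

lemma coupling_midpoint_le_of_convex_of_eq (h : X × StrongDual ℝ X → EReal)
    (hconv : ∀ p q : X × StrongDual ℝ X, ∀ a b : ℝ, 0 ≤ a → 0 ≤ b → a + b = 1 →
      h (a • p + b • q) ≤ (a : EReal) * h p + (b : EReal) * h q)
    (hge : ∀ p : X × StrongDual ℝ X, ((p.2 p.1 : ℝ) : EReal) ≤ h p)
    {p q : X × StrongDual ℝ X} (hp : h p = ((p.2 p.1 : ℝ) : EReal))
    (hq : h q = ((q.2 q.1 : ℝ) : EReal)) :
    ((1 / 2 : ℝ) • p + (1 / 2 : ℝ) • q).2 ((1 / 2 : ℝ) • p + (1 / 2 : ℝ) • q).1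
      ≤ (1 / 2) * p.2 p.1 + (1 / 2) * q.2 q.1 := by
  have hmid := hconv p q (1 / 2) (1 / 2) (by norm_num) (by norm_num) (by norm_num)
  rw [hp, hq] at hmid
  exact_mod_cast (hge _).trans hmid

end Coupling

theorem stmt_0_general {X : Type*} [NormedAddCommGroup X] [NormedSpace ℝ X]
    (h : X × StrongDual ℝ X → EReal)
    (hconv : ∀ p q : X × StrongDual ℝ X, ∀ a b : ℝ, 0 ≤ a → 0 ≤ b → a + b = 1 →
      h (a • p + b • q) ≤ (a : EReal) * h p + (b : EReal) * h q)
    (hge : ∀ p : X × StrongDual ℝ X, ((p.2 p.1 : ℝ) : EReal) ≤ h p) :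
    ∀ p ∈ {p : X × StrongDual ℝ X | h p = ((p.2 p.1 : ℝ) : EReal)},
    ∀ q ∈ {p : X × StrongDual ℝ X | h p = ((p.2 p.1 : ℝ) : EReal)},
      0 ≤ (p.2 - q.2) (p.1 - q.1) := by
  intro p hp q hq
  have hle := coupling_midpoint_le_of_convex_of_eq h hconv hge hp hq
  have hdefect := coupling_midpoint_defect p q
  linarith

theorem stmt_0 {X : Type*} [NormedAddCommGroup X] [NormedSpace ℝ X] [CompleteSpace X]
    (h : X × StrongDual ℝ X → EReal)
    (hconv : ∀ p q : X × StrongDual ℝ X, ∀ a b : ℝ, 0 ≤ a → 0 ≤ b → a + b = 1 →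
      h (a • p + b • q) ≤ (a : EReal) * h p + (b : EReal) * h q)
    (hge : ∀ p : X × StrongDual ℝ X, ((p.2 p.1 : ℝ) : EReal) ≤ h p) :
    ∀ p ∈ {p : X × StrongDual ℝ X | h p = ((p.2 p.1 : ℝ) : EReal)},
    ∀ q ∈ {p : X × StrongDual ℝ X | h p = ((p.2 p.1 : ℝ) : EReal)},
      0 ≤ (p.2 - q.2) (p.1 - q.1) :=
  stmt_0_general h hconv hge
end

section
/- Let T : X ⇉ X* be maximal monotone. Then (x,v) ∈ T if and only if φ_T(x,v) = ⟨x,v⟩, where φ_T is the Fitzpatrick function of T. -/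
/-! Taking `q = p` in the supremum gives `φ_S(p) ≥ ⟨p.1, p.2⟩` on `S`, while `φ_S(p) ≤ ⟨p.1, p.2⟩`
holds exactly when `p` is monotonically related to every point of `S`; for maximal monotone `S`
the latter forces `p ∈ S`, since `insert p S` is then monotone. -/

open NormedSpace

def MonotoneSet {X : Type*} [NormedAddCommGroup X] [NormedSpace ℝ X]
    (S : Set (X × StrongDual ℝ X)) : Prop :=
  ∀ p ∈ S, ∀ q ∈ S, 0 ≤ (p.2 - q.2) (p.1 - q.1)

def MaximalMonotoneSet {X : Type*} [NormedAddCommGroup X] [NormedSpace ℝ X]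
    (S : Set (X × StrongDual ℝ X)) : Prop :=
  MonotoneSet S ∧ ∀ S' : Set (X × StrongDual ℝ X), MonotoneSet S' → S ⊆ S' → S' = S

noncomputable def fitzpatrick {X : Type*} [NormedAddCommGroup X] [NormedSpace ℝ X]
    (S : Set (X × StrongDual ℝ X)) (p : X × StrongDual ℝ X) : EReal :=
  (⨆ q : S, (((q.1.2 - p.2) (p.1 - q.1.1) : ℝ) : EReal)) + ((p.2 p.1 : ℝ) : EReal)

section Fitzpatrick

variable {X : Type*} [NormedAddCommGroup X] [NormedSpace ℝ X]

lemma dual_pairing_sub_swap (p q : X × StrongDual ℝ X) :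
    (q.2 - p.2) (p.1 - q.1) = -((p.2 - q.2) (p.1 - q.1)) := by
  rw [← neg_sub p.2, neg_apply]

lemma dual_pairing_sub_comm (p q : X × StrongDual ℝ X) :
    (p.2 - q.2) (p.1 - q.1) = (q.2 - p.2) (q.1 - p.1) := by
  rw [← neg_sub q.2, ← neg_sub q.1, neg_apply, map_neg, neg_neg]

lemma fitzpatrick_le_pairing_iff (S : Set (X × StrongDual ℝ X)) (p : X × StrongDual ℝ X) :
    fitzpatrick S p ≤ ((p.2 p.1 : ℝ) : EReal) ↔ ∀ q ∈ S, 0 ≤ (p.2 - q.2) (p.1 - q.1) := by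
  rw [fitzpatrick]
  nth_rw 2 [← zero_add ((p.2 p.1 : ℝ) : EReal)]
  rw [(EReal.addLECancellable_coe _).add_le_add_iff_right, iSup_le_iff, Subtype.forall]
  refine forall₂_congr fun q _ => ?_
  rw [dual_pairing_sub_swap, ← EReal.coe_zero, EReal.coe_le_coe_iff, neg_nonpos]

lemma pairing_le_fitzpatrick_of_mem {S : Set (X × StrongDual ℝ X)} {p : X × StrongDual ℝ X}
    (hp : p ∈ S) : ((p.2 p.1 : ℝ) : EReal) ≤ fitzpatrick S p := by
  rw [fitzpatrick]
  refine le_add_of_nonneg_left (le_iSup_of_le ⟨p, hp⟩ ?_)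
  simp

lemma MonotoneSet.insert {S : Set (X × StrongDual ℝ X)} (hS : MonotoneSet S)
    {p : X × StrongDual ℝ X} (hp : ∀ q ∈ S, 0 ≤ (p.2 - q.2) (p.1 - q.1)) :
    MonotoneSet (insert p S) := by
  rintro a (rfl | ha) b (rfl | hb)
  · simp
  · exact hp b hb
  · rw [dual_pairing_sub_comm]
    exact hp a ha
  · exact hS a ha b hb

lemma MaximalMonotoneSet.mem_of_forall_nonneg {S : Set (X × StrongDual ℝ X)}
    (hS : MaximalMonotoneSet S) {p : X × StrongDual ℝ X}
    (hp : ∀ q ∈ S, 0 ≤ (p.2 - q.2) (p.1 - q.1)) : p ∈ S :=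
  hS.2 _ (hS.1.insert hp) (Set.subset_insert p S) ▸ Set.mem_insert p S

end Fitzpatrick

theorem stmt_4_general {X : Type*} [NormedAddCommGroup X] [NormedSpace ℝ X]
    (S : Set (X × StrongDual ℝ X)) (hS : MaximalMonotoneSet S) :
    ∀ p : X × StrongDual ℝ X, p ∈ S ↔ fitzpatrick S p = ((p.2 p.1 : ℝ) : EReal) := by
  intro p
  refine ⟨fun hp => ?_, fun h => ?_⟩
  · exact le_antisymm ((fitzpatrick_le_pairing_iff S p).2 (hS.1 p hp))
      (pairing_le_fitzpatrick_of_mem hp)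
  · exact hS.mem_of_forall_nonneg ((fitzpatrick_le_pairing_iff S p).1 h.le)

theorem stmt_4 {X : Type*} [NormedAddCommGroup X] [NormedSpace ℝ X] [CompleteSpace X]
    (S : Set (X × StrongDual ℝ X)) (hS : MaximalMonotoneSet S) :
    ∀ p : X × StrongDual ℝ X, p ∈ S ↔ fitzpatrick S p = ((p.2 p.1 : ℝ) : EReal) :=
  stmt_4_general S hS
end

section
/- Let T : X ⇉ X* be maximal monotone and let h : X × X* → ℝ∞ be convex, closed, with h(x,v) ≥ ⟨x,v⟩ everywhere and h(x,v) = ⟨x,v⟩ for (x,v) ∈ T. Then h ≥ φ_T, i.e., the Fitzpatrick function is the smallest element of the family H(T). -/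
open NormedSpace

/-! Fix `p` with `h p = c < ∞` and `(y, u) ∈ T`. Restricted to the segment from `p` to `(y, u)`,
the pairing `⟨x, v⟩` is a quadratic in the parameter `t`, bounded above by `h`, hence by the chord
`(1 - t) c + t ⟨y, u⟩`. Both sides agree at `t = 1`; dividing their difference by `1 - t` and
letting `t → 1` gives `⟨p.1 - y, u - p.2⟩ ≤ c - ⟨p.1, p.2⟩`, and taking the supremum over `T`
gives `φ_T p ≤ c`. -/

open Set Filter Topology

lemma le_of_forall_mem_Ioo_sub_mul_add_mul_le {e x c : ℝ}
    (H : ∀ t ∈ Ioo (0 : ℝ) 1, (1 - t) * e + t * x ≤ c) : x ≤ c := by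
  have hlim : Tendsto (fun t : ℝ => (1 - t) * e + t * x) (𝓝[<] 1) (𝓝 x) := by
    have := (by fun_prop : Continuous fun t : ℝ => (1 - t) * e + t * x).tendsto 1
    simpa using this.mono_left nhdsWithin_le_nhds
  exact le_of_tendsto hlim (mem_of_superset (Ioo_mem_nhdsLT zero_lt_one) H)

section

variable {X : Type*} [NormedAddCommGroup X] [NormedSpace ℝ X]

lemma apply_smul_add_smul (p q : X × StrongDual ℝ X) (a b : ℝ) :
    (a • p + b • q).2 (a • p + b • q).1 =
      a ^ 2 * p.2 p.1 + a * b * (p.2 q.1 + q.2 p.1) + b ^ 2 * q.2 q.1 := by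
  simp only [Prod.fst_add, Prod.snd_add, Prod.smul_fst, Prod.smul_snd, map_add, map_smul,
    add_apply, smul_apply, smul_eq_mul]
  ring

lemma fitzpatrick_summand_le {h : X × StrongDual ℝ X → EReal}
    (hconv : ∀ p q : X × StrongDual ℝ X, ∀ a b : ℝ, 0 ≤ a → 0 ≤ b → a + b = 1 →
      h (a • p + b • q) ≤ (a : EReal) * h p + (b : EReal) * h q)
    (hge : ∀ p : X × StrongDual ℝ X, ((p.2 p.1 : ℝ) : EReal) ≤ h p)
    {p q : X × StrongDual ℝ X} {c : ℝ} (hp : h p = c) (hq : h q = q.2 q.1) :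
    (q.2 - p.2) (p.1 - q.1) ≤ c - p.2 p.1 := by
  set e := p.2 p.1
  set d := p.2 q.1 + q.2 p.1
  set g := q.2 q.1
  have hchord : d - g ≤ c := by
    refine le_of_forall_mem_Ioo_sub_mul_add_mul_le (e := e) fun t ⟨ht0, ht1⟩ => ?_
    have hseg : (1 - t) ^ 2 * e + (1 - t) * t * d + t ^ 2 * g ≤ (1 - t) * c + t * g := by
      have := (hge _).trans (hconv p q (1 - t) t (by linarith) ht0.le (by ring))
      rw [hp, hq, apply_smul_add_smul] at this
      exact_mod_cast this
    have hfactor : (1 - t) * ((1 - t) * e + t * (d - g)) ≤ (1 - t) * c := by linarith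
    exact le_of_mul_le_mul_left hfactor (by linarith)
  have hsummand : (q.2 - p.2) (p.1 - q.1) = d - g - e := by
    simp only [sub_apply, map_sub, d, g, e]
    ring
  linarith

end

theorem stmt_5_general {X : Type*} [NormedAddCommGroup X] [NormedSpace ℝ X]
    (S : Set (X × StrongDual ℝ X))
    (h : X × StrongDual ℝ X → EReal)
    (hconv : ∀ p q : X × StrongDual ℝ X, ∀ a b : ℝ, 0 ≤ a → 0 ≤ b → a + b = 1 →
      h (a • p + b • q) ≤ (a : EReal) * h p + (b : EReal) * h q)
    (hge : ∀ p : X × StrongDual ℝ X, ((p.2 p.1 : ℝ) : EReal) ≤ h p)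
    (heq : ∀ p ∈ S, h p = ((p.2 p.1 : ℝ) : EReal)) :
    ∀ p : X × StrongDual ℝ X, fitzpatrick S p ≤ h p := by
  intro p
  cases hp : h p using EReal.rec with
  | bot => exact absurd hp (ne_bot_of_le_ne_bot (EReal.coe_ne_bot _) (hge p))
  | top => exact le_top
  | coe c =>
    have hsup : (⨆ q : S, (((q.1.2 - p.2) (p.1 - q.1.1) : ℝ) : EReal)) ≤
        ((c - p.2 p.1 : ℝ) : EReal) :=
      iSup_le fun q => EReal.coe_le_coe_iff.mpr <|
        fitzpatrick_summand_le hconv hge hp (heq q.1 q.2)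
    calc fitzpatrick S p ≤ ((c - p.2 p.1 : ℝ) : EReal) + ((p.2 p.1 : ℝ) : EReal) :=
          add_le_add_left hsup _
      _ = c := by rw [← EReal.coe_add, sub_add_cancel]

theorem stmt_5 {X : Type*} [NormedAddCommGroup X] [NormedSpace ℝ X] [CompleteSpace X]
    (S : Set (X × StrongDual ℝ X)) (hS : MaximalMonotoneSet S)
    (h : X × StrongDual ℝ X → EReal)
    (hconv : ∀ p q : X × StrongDual ℝ X, ∀ a b : ℝ, 0 ≤ a → 0 ≤ b → a + b = 1 →
      h (a • p + b • q) ≤ (a : EReal) * h p + (b : EReal) * h q)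
    (hlsc : LowerSemicontinuous h)
    (hge : ∀ p : X × StrongDual ℝ X, ((p.2 p.1 : ℝ) : EReal) ≤ h p)
    (heq : ∀ p ∈ S, h p = ((p.2 p.1 : ℝ) : EReal)) :
    ∀ p : X × StrongDual ℝ X, fitzpatrick S p ≤ h p :=
  stmt_5_general S h hconv hge heq
end

section
/- Let H be a real Hilbert space and h : H × H → ℝ ∪ {+∞} a proper convex lower semicontinuous function with h(x,v) ≥ ⟨x,v⟩ and h*(v,x) ≥ ⟨x,v⟩ for all x,v ∈ H. Then for every v₀ ∈ H there exists (x,v) ∈ H × H with h(x,v) = ⟨x,v⟩ and v + x = v₀. (Surjectivity of T + Id where T = {(x,v) : h(x,v) = ⟨x,v⟩}.) -/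
open scoped RealInnerProductSpace

noncomputable def hconj {H : Type*} [NormedAddCommGroup H] [InnerProductSpace ℝ H]
    (h : H × H → EReal) (v x : H) : EReal :=
  ⨆ q : H × H, (((⟪q.1, v⟫ + ⟪x, q.2⟫ : ℝ) : EReal) - h q)

def MonotoneSetH {H : Type*} [NormedAddCommGroup H] [InnerProductSpace ℝ H]
    (S : Set (H × H)) : Prop :=
  ∀ p ∈ S, ∀ q ∈ S, 0 ≤ ⟪p.1 - q.1, p.2 - q.2⟫

def MaximalMonotoneSetH {H : Type*} [NormedAddCommGroup H] [InnerProductSpace ℝ H]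
    (S : Set (H × H)) : Prop :=
  MonotoneSetH S ∧ ∀ S' : Set (H × H), MonotoneSetH S' → S ⊆ S' → S' = S

/-!
Minimise `h + ½‖· - (v₀, v₀)‖²` over `H × H` with the `L²` norm. The quadratic term makes
the objective strongly convex, so its sublevel sets near the infimum have small diameter and,
by Cantor's intersection theorem and lower semicontinuity, the infimum is attained at some
`(x, v)`. Optimality says that `(v₀ - x, v₀ - v)` is a subgradient of `h` at `(x, v)`, so
Fenchel–Young holds with equality there:
`h*(v₀ - x, v₀ - v) = ⟪x, v₀ - x⟫ + ⟪v, v₀ - v⟫ - h (x, v)`. Adding the hypotheses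
`h* ≥ ⟪·, ·⟫` at that point and `h (x, v) ≥ ⟪x, v⟫` gives
`‖v₀ - x - v‖² + (h (x, v) - ⟪x, v⟫) ≤ 0`.
-/

open Filter Topology

section ConvexEReal

variable {E F : Type*} [AddCommGroup E] [Module ℝ E] [AddCommGroup F] [Module ℝ F]
  {f : E → EReal}

def ConvexEReal (f : E → EReal) : Prop :=
  ∀ p q : E, ∀ a b : ℝ, 0 ≤ a → 0 ≤ b → a + b = 1 →
    f (a • p + b • q) ≤ (a : EReal) * f p + (b : EReal) * f q

theorem ConvexEReal.comp_linearMap (hf : ConvexEReal f) (L : F →ₗ[ℝ] E) :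
    ConvexEReal (f ∘ L) := fun p q a b ha hb hab => by
  simpa using hf (L p) (L q) a b ha hb hab

theorem ConvexEReal.le_coe (hf : ConvexEReal f) {p q : E} {a b r s : ℝ}
    (ha : 0 ≤ a) (hb : 0 ≤ b) (hab : a + b = 1) (hp : f p ≤ r) (hq : f q ≤ s) :
    f (a • p + b • q) ≤ ((a * r + b * s : ℝ) : EReal) :=
  calc f (a • p + b • q) ≤ (a : EReal) * f p + (b : EReal) * f q := hf p q a b ha hb hab
    _ ≤ (a : EReal) * r + (b : EReal) * s := by gcongr
    _ = ((a * r + b * s : ℝ) : EReal) := by norm_cast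

end ConvexEReal

section Prox

variable {E : Type*} [NormedAddCommGroup E] {f : E → EReal} {a : E}

/-- The sublevel set `{f + ‖· - a‖² / 2 ≤ c}`, with the quadratic moved to the right-hand side
to avoid addition in `EReal`. -/
def proxSublevel (f : E → EReal) (a : E) (c : ℝ) : Set E :=
  {p | f p ≤ ((c - ‖p - a‖ ^ 2 / 2 : ℝ) : EReal)}

theorem proxSublevel_mono {c c' : ℝ} (h : c ≤ c') : proxSublevel f a c ⊆ proxSublevel f a c' :=
  fun _ hp => hp.trans (EReal.coe_le_coe_iff.2 (by linarith))

theorem LowerSemicontinuous.isClosed_proxSublevel (hf : LowerSemicontinuous f) (a : E) (c : ℝ) :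
    IsClosed (proxSublevel f a c) :=
  hf.isClosed_epigraph.preimage (continuous_id.prodMk (EReal.continuous_coe_iff.2 (by fun_prop)))

theorem exists_forall_le_proxSublevel_nonempty (hproper : ∃ p, f p ≠ ⊤)
    (hbdd : ∃ b : ℝ, ∀ p, ((b - ‖p - a‖ ^ 2 / 2 : ℝ) : EReal) ≤ f p) :
    ∃ m : ℝ, (∀ q, ((m - ‖q - a‖ ^ 2 / 2 : ℝ) : EReal) ≤ f q) ∧
      ∀ c, m < c → (proxSublevel f a c).Nonempty := by
  obtain ⟨p₀, hp₀⟩ := hproper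
  obtain ⟨b, hb⟩ := hbdd
  have hmem : ∀ (q : E) (c : ℝ), f q ≤ c → q ∈ proxSublevel f a (c + ‖q - a‖ ^ 2 / 2) := by
    intro q c hq
    rwa [proxSublevel, Set.mem_ofPred_eq, add_sub_cancel_right]
  set T := {c : ℝ | (proxSublevel f a c).Nonempty}
  have hT : T.Nonempty := ⟨_, p₀, hmem p₀ _ (EReal.le_coe_toReal hp₀)⟩
  have hTb : BddBelow T := ⟨b, fun c ⟨p, hp⟩ => by
    have := EReal.coe_le_coe_iff.1 ((hb p).trans hp)
    linarith⟩
  refine ⟨sInf T, fun q => ?_, fun c hc => ?_⟩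
  · by_contra! hlt
    obtain ⟨c, hqc, hcm⟩ := EReal.lt_iff_exists_real_btwn.1 hlt
    have := csInf_le hTb ⟨q, hmem q c hqc.le⟩
    have := EReal.coe_lt_coe_iff.1 hcm
    linarith
  · obtain ⟨c', ⟨p, hp⟩, hc'⟩ := exists_lt_of_csInf_lt hT hc
    exact ⟨p, proxSublevel_mono hc'.le hp⟩

variable [InnerProductSpace ℝ E]

theorem norm_smul_add_smul_sq (x y : E) {s t : ℝ} (hst : s + t = 1) :
    ‖s • x + t • y‖ ^ 2 = s * ‖x‖ ^ 2 + t * ‖y‖ ^ 2 - s * t * ‖x - y‖ ^ 2 := by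
  rw [norm_add_sq_real, norm_sub_sq_real, norm_smul, norm_smul, real_inner_smul_left,
    real_inner_smul_right, mul_pow, mul_pow, Real.norm_eq_abs, Real.norm_eq_abs, sq_abs, sq_abs]
  obtain rfl : t = 1 - s := by linarith
  ring

theorem norm_sub_sq_le_of_mem_proxSublevel (hf : ConvexEReal f) {m ε : ℝ}
    (hmin : ∀ q, ((m - ‖q - a‖ ^ 2 / 2 : ℝ) : EReal) ≤ f q) {p q : E}
    (hp : p ∈ proxSublevel f a (m + ε)) (hq : q ∈ proxSublevel f a (m + ε)) :
    ‖p - q‖ ^ 2 ≤ 8 * ε := by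
  have hmid := EReal.coe_le_coe_iff.1 <| (hmin ((1 / 2 : ℝ) • p + (1 / 2 : ℝ) • q)).trans
    (hf.le_coe (by norm_num) (by norm_num) (by norm_num) hp hq)
  have hshift : (1 / 2 : ℝ) • p + (1 / 2 : ℝ) • q - a =
      (1 / 2 : ℝ) • (p - a) + (1 / 2 : ℝ) • (q - a) := by
    module
  rw [hshift, norm_smul_add_smul_sq _ _ (by norm_num), sub_sub_sub_cancel_right] at hmid
  linarith

theorem coe_add_inner_le_of_mem_proxSublevel (hf : ConvexEReal f) {m : ℝ}
    (hmin : ∀ q, ((m - ‖q - a‖ ^ 2 / 2 : ℝ) : EReal) ≤ f q) {p : E}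
    (hp : p ∈ proxSublevel f a m) (q : E) :
    ((m - ‖p - a‖ ^ 2 / 2 + ⟪a - p, q - p⟫ : ℝ) : EReal) ≤ f q := by
  rcases eq_or_ne (f q) ⊤ with hq | hq
  · simp [hq]
  set s := (f q).toReal
  have hqs : f q = s :=
    (EReal.coe_toReal hq (ne_bot_of_le_ne_bot (EReal.coe_ne_bot _) (hmin q))).symm
  -- compare the minimum with the value at `(1 - t) • p + t • q`, then let `t → 0`
  have hseg : ∀ t : ℝ, 0 < t → t ≤ 1 → m - ‖q - a‖ ^ 2 / 2 + (1 - t) * ‖p - q‖ ^ 2 / 2 ≤ s := by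
    intro t ht₀ ht₁
    have h := EReal.coe_le_coe_iff.1 <| (hmin ((1 - t) • p + t • q)).trans
      (hf.le_coe (by linarith) ht₀.le (by ring) hp hqs.le)
    have hshift : (1 - t) • p + t • q - a = (1 - t) • (p - a) + t • (q - a) := by module
    rw [hshift, norm_smul_add_smul_sq _ _ (by ring), sub_sub_sub_cancel_right] at h
    refine sub_nonpos.1 (nonpos_of_mul_nonpos_left ?_ ht₀)
    linarith
  have hlim : Tendsto (fun n : ℕ => m - ‖q - a‖ ^ 2 / 2 + (1 - 1 / ((n : ℝ) + 1)) * ‖p - q‖ ^ 2 / 2)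
      atTop (𝓝 (m - ‖q - a‖ ^ 2 / 2 + (1 - 0) * ‖p - q‖ ^ 2 / 2)) :=
    tendsto_const_nhds.add (((tendsto_const_nhds.sub tendsto_one_div_add_atTop_nhds_zero_nat).mul
      tendsto_const_nhds).div_const _)
  have hs := le_of_tendsto' hlim fun n =>
    hseg _ (by positivity) (div_le_one_of_le₀ (by linarith) (by positivity))
  have hexp : ‖q - a‖ ^ 2 = ‖p - q‖ ^ 2 - 2 * ⟪a - p, q - p⟫ + ‖p - a‖ ^ 2 := by
    rw [norm_sub_rev p q, norm_sub_rev p a, real_inner_comm (q - p), ← norm_sub_sq_real,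
      sub_sub_sub_cancel_right]
  rw [hqs, EReal.coe_le_coe_iff]
  linarith

theorem exists_mem_proxSublevel [CompleteSpace E] (hf : ConvexEReal f)
    (hlsc : LowerSemicontinuous f) {m : ℝ} (hmin : ∀ q, ((m - ‖q - a‖ ^ 2 / 2 : ℝ) : EReal) ≤ f q)
    (hne : ∀ c, m < c → (proxSublevel f a c).Nonempty) :
    ∃ p, p ∈ proxSublevel f a m := by
  set s : ℕ → Set E := fun k => proxSublevel f a (m + 1 / ((k : ℝ) + 1))
  have hdist : ∀ k, ∀ p ∈ s k, ∀ q ∈ s k, dist p q ≤ √(8 * (1 / ((k : ℝ) + 1))) :=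
    fun k p hp q hq => by
      rw [dist_eq_norm]
      exact (Real.le_sqrt (norm_nonneg _) (by positivity)).2
        (norm_sub_sq_le_of_mem_proxSublevel hf hmin hp hq)
  have hdiam_lim : Tendsto (fun k => Metric.diam (s k)) atTop (𝓝 0) := by
    refine squeeze_zero (fun k => Metric.diam_nonneg)
      (fun k => Metric.diam_le_of_forall_dist_le (Real.sqrt_nonneg _) (hdist k)) ?_
    simpa using (tendsto_one_div_add_atTop_nhds_zero_nat.const_mul 8).sqrt
  obtain ⟨p, hp⟩ := Metric.nonempty_iInter_of_nonempty_biInter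
    (fun k => hlsc.isClosed_proxSublevel a _) (fun k => Metric.isBounded_iff.2 ⟨_, hdist k⟩)
    (fun N => (hne _ (lt_add_of_pos_right m Nat.one_div_pos_of_nat)).mono fun p hp =>
      Set.mem_iInter₂.2 fun n hn =>
        proxSublevel_mono (add_le_add le_rfl (Nat.one_div_le_one_div hn)) hp)
    hdiam_lim
  have hlim : Tendsto (fun k : ℕ => m + 1 / ((k : ℝ) + 1) - ‖p - a‖ ^ 2 / 2) atTop
      (𝓝 (m - ‖p - a‖ ^ 2 / 2)) := by
    simpa using (tendsto_one_div_add_atTop_nhds_zero_nat.const_add m).sub_const (‖p - a‖ ^ 2 / 2)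
  exact ⟨p, ge_of_tendsto' (EReal.tendsto_coe.2 hlim) fun k => Set.mem_iInter.1 hp k⟩

noncomputable def fenchelConj (f : E → EReal) (u : E) : EReal :=
  ⨆ q, ((⟪q, u⟫ : ℝ) : EReal) - f q

theorem fenchelConj_le_of_forall_le {p u : E} {r : ℝ}
    (h : ∀ q, ((r + ⟪u, q - p⟫ : ℝ) : EReal) ≤ f q) :
    fenchelConj f u ≤ ((⟪p, u⟫ - r : ℝ) : EReal) :=
  iSup_le fun q => EReal.sub_le_of_le_add <|
    calc ((⟪q, u⟫ : ℝ) : EReal) = ((⟪p, u⟫ - r : ℝ) : EReal) + ((r + ⟪u, q - p⟫ : ℝ) : EReal) := by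
          rw [← EReal.coe_add, inner_sub_right, real_inner_comm p, real_inner_comm q]
          ring_nf
      _ ≤ ((⟪p, u⟫ - r : ℝ) : EReal) + f q := add_le_add le_rfl (h q)

end Prox

section Product

variable {H : Type*} [NormedAddCommGroup H] [InnerProductSpace ℝ H]

theorem hconj_eq_fenchelConj (h : H × H → EReal) (v x : H) :
    hconj h v x = fenchelConj (h ∘ WithLp.ofLp) (WithLp.toLp 2 (v, x)) := by
  rw [hconj, fenchelConj, ← (WithLp.equiv 2 (H × H)).symm.iSup_comp]
  congr 1
  ext q
  simp [real_inner_comm x]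

theorem inner_add_norm_sub_sq_nonneg (x v w : H) :
    0 ≤ ⟪x, v⟫ + (‖x - w‖ ^ 2 + ‖v - w‖ ^ 2) / 2 := by
  have h := real_inner_self_nonneg (x := x + v - w)
  have hw := real_inner_self_nonneg (x := w)
  simp only [← real_inner_self_eq_norm_sq, inner_add_left, inner_add_right, inner_sub_left,
    inner_sub_right] at h ⊢
  linarith [real_inner_comm x v, real_inner_comm x w, real_inner_comm v w]

theorem eq_inner_and_add_eq_of_le {x v w : H} {r : ℝ} (hr : ⟪x, v⟫ ≤ r)
    (h : ⟪w - v, w - x⟫ ≤ ⟪x, w - x⟫ + ⟪v, w - v⟫ - r) : r = ⟪x, v⟫ ∧ v + x = w := by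
  have hid : ‖w - x - v‖ ^ 2 = ⟪w - v, w - x⟫ - ⟪x, w - x⟫ - ⟪v, w - v⟫ + ⟪x, v⟫ := by
    simp only [← real_inner_self_eq_norm_sq, inner_sub_left, inner_sub_right]
    linarith [real_inner_comm x v, real_inner_comm x w, real_inner_comm v w]
  have hzero : ‖w - x - v‖ ^ 2 = 0 := le_antisymm (by linarith) (sq_nonneg _)
  refine ⟨by linarith, ?_⟩
  rw [sq_eq_zero_iff, norm_eq_zero, sub_sub, sub_eq_zero, add_comm] at hzero
  exact hzero.symm

end Product

theorem stmt_9 {H : Type*} [NormedAddCommGroup H] [InnerProductSpace ℝ H] [CompleteSpace H]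
    (h : H × H → EReal)
    (hproper : ∃ p : H × H, h p ≠ ⊤)
    (hconv : ∀ p q : H × H, ∀ a b : ℝ, 0 ≤ a → 0 ≤ b → a + b = 1 →
      h (a • p + b • q) ≤ (a : EReal) * h p + (b : EReal) * h q)
    (hlsc : LowerSemicontinuous h)
    (hge : ∀ x v : H, ((⟪x, v⟫ : ℝ) : EReal) ≤ h (x, v))
    (hgestar : ∀ x v : H, ((⟪x, v⟫ : ℝ) : EReal) ≤ hconj h v x) :
    ∀ v₀ : H, ∃ x v : H, h (x, v) = ((⟪x, v⟫ : ℝ) : EReal) ∧ v + x = v₀ := by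
  intro v₀
  -- `H × H` carries the sup norm; strong convexity of the quadratic needs the Hilbert norm
  set f : WithLp 2 (H × H) → EReal := h ∘ WithLp.ofLp
  set a : WithLp 2 (H × H) := WithLp.toLp 2 (v₀, v₀)
  have hf : ConvexEReal f := ConvexEReal.comp_linearMap (E := H × H) hconv
    (WithLp.linearEquiv 2 ℝ (H × H)).toLinearMap
  have hbdd : ∀ p, ((0 - ‖p - a‖ ^ 2 / 2 : ℝ) : EReal) ≤ f p := fun p => by
    rcases p with ⟨x, v⟩
    refine (EReal.coe_le_coe_iff.2 ?_).trans (hge x v)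
    rw [WithLp.prod_norm_sq_eq_of_L2]
    change 0 - (‖x - v₀‖ ^ 2 + ‖v - v₀‖ ^ 2) / 2 ≤ ⟪x, v⟫
    linarith [inner_add_norm_sub_sq_nonneg x v v₀]
  obtain ⟨q, hq⟩ := hproper
  obtain ⟨m, hmin, hne⟩ := exists_forall_le_proxSublevel_nonempty (f := f) (a := a)
    ⟨WithLp.toLp 2 q, hq⟩ ⟨0, hbdd⟩
  obtain ⟨⟨x, v⟩, hp⟩ :=
    exists_mem_proxSublevel hf (hlsc.comp (WithLp.prod_continuous_ofLp 2 H H)) hmin hne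
  set r := m - ‖WithLp.toLp 2 (x, v) - a‖ ^ 2 / 2
  have hconj_le : hconj h (v₀ - x) (v₀ - v) ≤ ((⟪x, v₀ - x⟫ + ⟪v, v₀ - v⟫ - r : ℝ) : EReal) := by
    rw [hconj_eq_fenchelConj]
    exact fenchelConj_le_of_forall_le (coe_add_inner_le_of_mem_proxSublevel hf hmin hp)
  have hr : h (x, v) ≤ r := hp
  obtain ⟨hrxv, hsum⟩ := eq_inner_and_add_eq_of_le (EReal.coe_le_coe_iff.1 ((hge x v).trans hr))
    (EReal.coe_le_coe_iff.1 ((hgestar _ _).trans hconj_le))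
  exact ⟨x, v, le_antisymm (hrxv ▸ hr) (hge x v), hsum⟩
end

section
/- Let H be a real Hilbert space and h : H × H → ℝ ∪ {+∞} a proper convex lower semicontinuous function satisfying h(x,v) ≥ ⟨x,v⟩ and h*(v,x) ≥ ⟨x,v⟩ for all x,v. Then the operator T with graph {(x,v) : h(x,v) = ⟨x,v⟩} is maximal monotone. -/
open scoped RealInnerProductSpace

/-!
Let `(x₀, v₀)` be monotonically related to the graph and put `w = x₀ + v₀`. On `H × H` with the
`L²` norm, `h + ‖· - (w, w)‖² / 2` is strongly convex, lower semicontinuous and bounded below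
(because `h (x, v) ≥ ⟪x, v⟫`), so it attains its minimum at some `(a, b)`; equivalently
`(w - a, w - b)` is a subgradient of `h` at `(a, b)`. Fenchel–Young then bounds
`h* (w - a, w - b)` by `⟪a, w - a⟫ + ⟪w - b, b⟫ - h (a, b)`, and the two hypotheses
`h ≥ ⟪·, ·⟫`, `h* ≥ ⟪·, ·⟫` combine to `‖w - a - b‖² + (h (a, b) - ⟪a, b⟫) ≤ 0`. So `(a, b)` lies in
the graph and `a + b = x₀ + v₀`, whence monotonicity gives `-‖a - x₀‖² ≥ 0`, i.e.
`(a, b) = (x₀, v₀)`. Monotonicity of the graph itself is convexity of `h` at midpoints.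
-/

open Filter Topology Set

theorem EReal.add_coe_le_coe_iff {x : EReal} (hx : x ≠ ⊥) {r c : ℝ} :
    x + r ≤ c ↔ x ≠ ⊤ ∧ x.toReal + r ≤ c := by
  induction x using EReal.rec <;> simp_all [← EReal.coe_add]

theorem convexOn_toReal_setOf_ne_top {E : Type*} [AddCommGroup E] [Module ℝ E] {f : E → EReal}
    (hconv : ∀ p q : E, ∀ a b : ℝ, 0 ≤ a → 0 ≤ b → a + b = 1 →
      f (a • p + b • q) ≤ (a : EReal) * f p + (b : EReal) * f q)
    (hbot : ∀ x, f x ≠ ⊥) : ConvexOn ℝ {x | f x ≠ ⊤} (fun x => (f x).toReal) := by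
  have key : ∀ p ∈ {x | f x ≠ ⊤}, ∀ q ∈ {x | f x ≠ ⊤}, ∀ a b : ℝ, 0 ≤ a → 0 ≤ b → a + b = 1 →
      f (a • p + b • q) ≤ ((a * (f p).toReal + b * (f q).toReal : ℝ) : EReal) := by
    intro p hp q hq a b ha hb hab
    rw [EReal.coe_add, EReal.coe_mul, EReal.coe_mul, EReal.coe_toReal hp (hbot p),
      EReal.coe_toReal hq (hbot q)]
    exact hconv p q a b ha hb hab
  refine ⟨fun p hp q hq a b ha hb hab => ?_, fun p hp q hq a b ha hb hab => ?_⟩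
  · exact ((key p hp q hq a b ha hb hab).trans_lt (EReal.coe_lt_top _)).ne
  · simpa only [EReal.toReal_coe, smul_eq_mul] using
      EReal.toReal_le_toReal (key p hp q hq a b ha hb hab) (hbot _) (EReal.coe_ne_top _)

theorem LowerSemicontinuous.isClosed_sublevel_toReal_add_sq_norm_sub {E : Type*}
    [NormedAddCommGroup E] {f : E → EReal}
    (hf : LowerSemicontinuous f) (hbot : ∀ x, f x ≠ ⊥) (z : E) (c : ℝ) :
    IsClosed {x ∈ {x | f x ≠ ⊤} | (f x).toReal + ‖x - z‖ ^ 2 / 2 ≤ c} := by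
  have hF : LowerSemicontinuous fun x => f x + ((‖x - z‖ ^ 2 / 2 : ℝ) : EReal) :=
    hf.add' (continuous_coe_real_ereal.comp (by fun_prop)).lowerSemicontinuous
      fun x => EReal.continuousAt_add (Or.inr (EReal.coe_ne_bot _)) (Or.inr (EReal.coe_ne_top _))
  convert hF.isClosed_preimage (c : EReal) using 1
  ext x
  exact (EReal.add_coe_le_coe_iff (hbot x)).symm

section StrongConvex

variable {E : Type*} [NormedAddCommGroup E] [NormedSpace ℝ E] {s : Set E} {f : E → ℝ} {m c : ℝ}

theorem StrongConvexOn.sq_norm_sub_le (hf : StrongConvexOn s m f) (hm : 0 < m)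
    (hc : ∀ z ∈ s, c ≤ f z) {x y : E} (hx : x ∈ s) (hy : y ∈ s) :
    ‖x - y‖ ^ 2 ≤ 4 / m * ((f x - c) + (f y - c)) := by
  have hhalf : (0 : ℝ) ≤ 1 / 2 := by norm_num
  have hmid := hf.2 hx hy hhalf hhalf (by norm_num)
  have hlow := hc _ (hf.1 hx hy hhalf hhalf (by norm_num))
  simp only [smul_eq_mul] at hmid
  rw [div_mul_eq_mul_div, le_div_iff₀ hm]
  linarith

theorem StrongConvexOn.cauchySeq_of_tendsto (hf : StrongConvexOn s m f) (hm : 0 < m)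
    (hc : ∀ z ∈ s, c ≤ f z) {u : ℕ → E} (hu : ∀ n, u n ∈ s)
    (hlim : Tendsto (fun n => f (u n)) atTop (𝓝 c)) : CauchySeq u := by
  rw [cauchySeq_iff_tendsto_dist_atTop_0]
  have hgap : Tendsto (fun n : ℕ × ℕ => √(4 / m * ((f (u n.1) - c) + (f (u n.2) - c))))
      atTop (𝓝 0) := by
    have h0 : Tendsto (fun n => f (u n) - c) atTop (𝓝 0) := by
      simpa using hlim.sub_const c
    have := (((h0.comp tendsto_fst).add (h0.comp tendsto_snd)).const_mul (4 / m)).sqrt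
    simpa [prod_atTop_atTop_eq, Function.comp_def] using this
  refine squeeze_zero (fun _ => dist_nonneg) (fun n => ?_) hgap
  rw [dist_eq_norm]
  exact Real.le_sqrt_of_sq_le (hf.sq_norm_sub_le hm hc (hu _) (hu _))

theorem StrongConvexOn.exists_isMinOn [CompleteSpace E] (hf : StrongConvexOn s m f)
    (hm : 0 < m) (hs : s.Nonempty) (hbdd : BddBelow (f '' s))
    (hclosed : ∀ c, IsClosed {x ∈ s | f x ≤ c}) : ∃ x ∈ s, IsMinOn f s x := by
  set c := sInf (f '' s)
  have hc : ∀ z ∈ s, c ≤ f z := fun z hz => csInf_le hbdd (mem_image_of_mem f hz)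
  obtain ⟨v, -, hv, hvs⟩ := exists_seq_tendsto_sInf (hs.image f) hbdd
  choose u hu hfu using hvs
  obtain ⟨x, hx⟩ := cauchySeq_tendsto_of_complete
    (hf.cauchySeq_of_tendsto hm hc hu (by simpa only [hfu] using hv))
  have hsub : ∀ d, c < d → x ∈ s ∧ f x ≤ d := fun d hd =>
    (hclosed d).mem_of_tendsto hx <| (hv.eventually_lt_const hd).mono fun n hn =>
      ⟨hu n, (hfu n).symm ▸ hn.le⟩
  obtain ⟨hxs, -⟩ := hsub (c + 1) (lt_add_one c)
  exact ⟨x, hxs, fun z hz =>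
    (le_of_forall_gt_imp_ge_of_dense fun d hd => (hsub d hd).2).trans (hc z hz)⟩

end StrongConvex

section Proximal

variable {E : Type*} [NormedAddCommGroup E] [InnerProductSpace ℝ E] {s : Set E} {g : E → ℝ}

theorem ConvexOn.strongConvexOn_add_sq_norm_sub (hg : ConvexOn ℝ s g) (z : E) :
    StrongConvexOn s 1 (fun x => g x + ‖x - z‖ ^ 2 / 2) := by
  rw [strongConvexOn_iff_convex]
  refine ((hg.add ((-innerₛₗ ℝ z).convexOn hg.1)).add_const (‖z‖ ^ 2 / 2)).congr fun x _ => ?_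
  simp only [Pi.add_apply, LinearMap.neg_apply, innerₛₗ_apply_apply, norm_sub_sq_real,
    real_inner_comm]
  ring

theorem ConvexOn.le_add_inner_of_isMinOn (hg : ConvexOn ℝ s g) {z p q : E} (hp : p ∈ s)
    (hq : q ∈ s) (hmin : IsMinOn (fun x => g x + ‖x - z‖ ^ 2 / 2) s p) :
    g p + ⟪z - p, q - p⟫ ≤ g q := by
  have hstep : ∀ t ∈ Ioo (0 : ℝ) 1, g p + ⟪z - p, q - p⟫ ≤ g q + t / 2 * ‖q - p‖ ^ 2 := by
    rintro t ⟨ht0, ht1⟩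
    have hmem : (1 - t) • p + t • q ∈ s := hg.1 hp hq (by linarith) ht0.le (by ring)
    have hconv := hg.2 hp hq (by linarith : 0 ≤ 1 - t) ht0.le (by ring)
    have hle : g p + ‖p - z‖ ^ 2 / 2
        ≤ g ((1 - t) • p + t • q) + ‖(1 - t) • p + t • q - z‖ ^ 2 / 2 := hmin hmem
    have hsq : ‖(1 - t) • p + t • q - z‖ ^ 2
        = ‖p - z‖ ^ 2 + 2 * t * ⟪p - z, q - p⟫ + t ^ 2 * ‖q - p‖ ^ 2 := by
      rw [show (1 - t) • p + t • q - z = (p - z) + t • (q - p) by module, norm_add_sq_real,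
        real_inner_smul_right, norm_smul, Real.norm_of_nonneg ht0.le]
      ring
    simp only [hsq, smul_eq_mul] at hle hconv
    have : t * (g p + ⟪z - p, q - p⟫) ≤ t * (g q + t / 2 * ‖q - p‖ ^ 2) := by
      rw [← neg_sub p z, inner_neg_left]
      nlinarith
    exact le_of_mul_le_mul_left this ht0
  have hlim : Tendsto (fun t : ℝ => g q + t / 2 * ‖q - p‖ ^ 2) (𝓝[>] 0) (𝓝 (g q)) := by
    have : Continuous (fun t : ℝ => g q + t / 2 * ‖q - p‖ ^ 2) := by fun_prop
    simpa using this.continuousWithinAt.tendsto (x := 0) (s := Ioi 0)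
  exact ge_of_tendsto hlim (eventually_of_mem (Ioo_mem_nhdsGT one_pos) hstep)

def HasSubgradientAt (f : E → EReal) (u p : E) : Prop :=
  ∃ r : ℝ, f p = r ∧ ∀ q, ((r + ⟪u, q - p⟫ : ℝ) : EReal) ≤ f q

/-- The point `p` is the proximal point of `f` at `z`, the minimizer of `f + ‖· - z‖² / 2`. -/
theorem exists_hasSubgradientAt_sub [CompleteSpace E] {f : E → EReal}
    (hconv : ∀ p q : E, ∀ a b : ℝ, 0 ≤ a → 0 ≤ b → a + b = 1 →
      f (a • p + b • q) ≤ (a : EReal) * f p + (b : EReal) * f q)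
    (hlsc : LowerSemicontinuous f) (hproper : ∃ x, f x ≠ ⊤) {z : E} {c : ℝ}
    (hbdd : ∀ x, ((c - ‖x - z‖ ^ 2 / 2 : ℝ) : EReal) ≤ f x) :
    ∃ p, HasSubgradientAt f (z - p) p := by
  have hbot : ∀ x, f x ≠ ⊥ := fun x => ne_bot_of_le_ne_bot (EReal.coe_ne_bot _) (hbdd x)
  have hg := convexOn_toReal_setOf_ne_top hconv hbot
  have hlow : ∀ x ∈ {x | f x ≠ ⊤}, c ≤ (f x).toReal + ‖x - z‖ ^ 2 / 2 := fun x hx => by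
    have := EReal.toReal_le_toReal (hbdd x) (EReal.coe_ne_bot _) hx
    rw [EReal.toReal_coe] at this
    linarith
  obtain ⟨p, hp, hmin⟩ := (hg.strongConvexOn_add_sq_norm_sub z).exists_isMinOn one_pos hproper
    ⟨c, forall_mem_image.2 hlow⟩ (hlsc.isClosed_sublevel_toReal_add_sq_norm_sub hbot z)
  refine ⟨p, (f p).toReal, (EReal.coe_toReal hp (hbot p)).symm, fun q => ?_⟩
  by_cases hq : f q = ⊤
  · simp [hq]
  · rw [← EReal.coe_toReal hq (hbot q)]
    exact EReal.coe_le_coe_iff.2 (hg.le_add_inner_of_isMinOn hp hq hmin)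

end Proximal

section Graph

variable {H : Type*} [NormedAddCommGroup H] [InnerProductSpace ℝ H] {h : H × H → EReal}

theorem hconj_le_of_affine_le {a b v x : H} {r : ℝ}
    (hsub : ∀ q : H × H, ((r + (⟪q.1 - a, v⟫ + ⟪x, q.2 - b⟫) : ℝ) : EReal) ≤ h q) :
    hconj h v x ≤ ((⟪a, v⟫ + ⟪x, b⟫ - r : ℝ) : EReal) := by
  refine iSup_le fun q => ?_
  calc ((⟪q.1, v⟫ + ⟪x, q.2⟫ : ℝ) : EReal) - h q
      ≤ ((⟪q.1, v⟫ + ⟪x, q.2⟫ : ℝ) : EReal) - ((r + (⟪q.1 - a, v⟫ + ⟪x, q.2 - b⟫) : ℝ) : EReal) :=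
        EReal.sub_le_sub le_rfl (hsub q)
    _ = ((⟪a, v⟫ + ⟪x, b⟫ - r : ℝ) : EReal) := by
        rw [← EReal.coe_sub]
        congr 1
        simp only [inner_sub_left, inner_sub_right]
        ring

theorem monotoneSetH_setOf_eq_inner
    (hconv : ∀ p q : H × H, ∀ a b : ℝ, 0 ≤ a → 0 ≤ b → a + b = 1 →
      h (a • p + b • q) ≤ (a : EReal) * h p + (b : EReal) * h q)
    (hge : ∀ x v : H, ((⟪x, v⟫ : ℝ) : EReal) ≤ h (x, v)) :
    MonotoneSetH {p : H × H | h p = ((⟪p.1, p.2⟫ : ℝ) : EReal)} := by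
  intro p (hp : h p = _) q (hq : h q = _)
  have hmid := (hge _ _).trans (hconv p q (1 / 2) (1 / 2) (by norm_num) (by norm_num) (by norm_num))
  rw [hp, hq, ← EReal.coe_mul, ← EReal.coe_mul, ← EReal.coe_add, EReal.coe_le_coe_iff] at hmid
  simp only [Prod.smul_fst, Prod.smul_snd, inner_add_left, inner_add_right, real_inner_smul_left,
    real_inner_smul_right] at hmid
  simp only [inner_sub_left, inner_sub_right]
  linarith [real_inner_comm p.1 q.2, real_inner_comm q.1 p.2]

theorem add_eq_and_eq_inner_of_le {a b w : H} {r : ℝ} (h₁ : ⟪a, b⟫ ≤ r)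
    (h₂ : ⟪w - b, w - a⟫ ≤ ⟪a, w - a⟫ + ⟪w - b, b⟫ - r) : a + b = w ∧ r = ⟪a, b⟫ := by
  have hid : ⟪w - b, w - a⟫ - ⟪a, w - a⟫ - ⟪w - b, b⟫ + ⟪a, b⟫ = ‖w - (a + b)‖ ^ 2 := by
    rw [← real_inner_self_eq_norm_sq]
    simp only [inner_sub_left, inner_sub_right, inner_add_left, inner_add_right]
    linarith [real_inner_comm a b, real_inner_comm a w, real_inner_comm b w]
  have hn : ‖w - (a + b)‖ ^ 2 = 0 := le_antisymm (by linarith) (sq_nonneg _)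
  exact ⟨(sub_eq_zero.1 (by simpa using hn)).symm, by linarith⟩

theorem eq_and_eq_of_add_eq_of_inner_nonneg {a b x v : H} (hsum : a + b = x + v)
    (hmono : 0 ≤ ⟪a - x, b - v⟫) : a = x ∧ b = v := by
  have hba : b - v = -(a - x) := by
    rw [eq_neg_iff_add_eq_zero, show b - v + (a - x) = a + b - (x + v) by abel, hsum, sub_self]
  rw [hba, inner_neg_right, real_inner_self_eq_norm_sq] at hmono
  have hax : a = x := sub_eq_zero.1 (norm_eq_zero.1 (by nlinarith [norm_nonneg (a - x)]))
  subst hax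
  exact ⟨rfl, add_left_cancel hsum⟩

theorem neg_sq_norm_sub_add_sq_norm_sub_le_inner (x v w : H) :
    -((‖x - w‖ ^ 2 + ‖v - w‖ ^ 2) / 2) ≤ ⟪x, v⟫ := by
  linarith [norm_sub_sq_real x w, norm_sub_sq_real v w, norm_add_sq_real x v,
    norm_sub_sq_real (x + v) w, inner_add_left (𝕜 := ℝ) x v w, sq_nonneg ‖x + v - w‖,
    sq_nonneg ‖w‖]

theorem eq_inner_of_forall_inner_nonneg [CompleteSpace H]
    (hproper : ∃ p : H × H, h p ≠ ⊤)
    (hconv : ∀ p q : H × H, ∀ a b : ℝ, 0 ≤ a → 0 ≤ b → a + b = 1 →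
      h (a • p + b • q) ≤ (a : EReal) * h p + (b : EReal) * h q)
    (hlsc : LowerSemicontinuous h)
    (hge : ∀ x v : H, ((⟪x, v⟫ : ℝ) : EReal) ≤ h (x, v))
    (hgestar : ∀ x v : H, ((⟪x, v⟫ : ℝ) : EReal) ≤ hconj h v x) {x₀ v₀ : H}
    (hmono : ∀ q : H × H, h q = ((⟪q.1, q.2⟫ : ℝ) : EReal) → 0 ≤ ⟪q.1 - x₀, q.2 - v₀⟫) :
    h (x₀, v₀) = ((⟪x₀, v₀⟫ : ℝ) : EReal) := by
  set w := x₀ + v₀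
  have hbdd : ∀ q : WithLp 2 (H × H),
      ((0 - ‖q - WithLp.toLp 2 (w, w)‖ ^ 2 / 2 : ℝ) : EReal) ≤ h q.ofLp := fun q => by
    refine (EReal.coe_le_coe_iff.2 ?_).trans (hge q.fst q.snd)
    rw [zero_sub, WithLp.prod_norm_sq_eq_of_L2]
    exact neg_sq_norm_sub_add_sq_norm_sub_le_inner q.fst q.snd w
  obtain ⟨p, r, hr, hsub⟩ := exists_hasSubgradientAt_sub (E := WithLp 2 (H × H))
    (f := fun q => h q.ofLp) (fun p q a b => hconv p.ofLp q.ofLp a b)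
    (hlsc.comp (WithLp.prod_continuous_ofLp 2 H H))
    (hproper.elim fun q hq => ⟨WithLp.toLp 2 q, hq⟩) hbdd
  set a := p.fst
  set b := p.snd
  have hsub' : ∀ q : H × H, ((r + (⟪q.1 - a, w - a⟫ + ⟪w - b, q.2 - b⟫) : ℝ) : EReal) ≤ h q :=
    fun q => by simpa [WithLp.prod_inner_apply, real_inner_comm] using hsub (WithLp.toLp 2 q)
  have h₁ : ⟪a, b⟫ ≤ r := EReal.coe_le_coe_iff.1 (hr ▸ hge a b)
  have h₂ := EReal.coe_le_coe_iff.1 ((hgestar (w - b) (w - a)).trans (hconj_le_of_affine_le hsub'))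
  obtain ⟨hab, rfl⟩ := add_eq_and_eq_inner_of_le h₁ h₂
  obtain ⟨rfl, rfl⟩ := eq_and_eq_of_add_eq_of_inner_nonneg hab (hmono (a, b) hr)
  exact hr

end Graph

theorem stmt_10 {H : Type*} [NormedAddCommGroup H] [InnerProductSpace ℝ H] [CompleteSpace H]
    (h : H × H → EReal)
    (hproper : ∃ p : H × H, h p ≠ ⊤)
    (hconv : ∀ p q : H × H, ∀ a b : ℝ, 0 ≤ a → 0 ≤ b → a + b = 1 →
      h (a • p + b • q) ≤ (a : EReal) * h p + (b : EReal) * h q)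
    (hlsc : LowerSemicontinuous h)
    (hge : ∀ x v : H, ((⟪x, v⟫ : ℝ) : EReal) ≤ h (x, v))
    (hgestar : ∀ x v : H, ((⟪x, v⟫ : ℝ) : EReal) ≤ hconj h v x) :
    MaximalMonotoneSetH {p : H × H | h p = ((⟪p.1, p.2⟫ : ℝ) : EReal)} := by
  refine ⟨monotoneSetH_setOf_eq_inner hconv hge, fun S hS hsub => ?_⟩
  refine (hsub.antisymm fun p hp => ?_).symm
  exact eq_inner_of_forall_inner_nonneg hproper hconv hlsc hge hgestar fun q hq =>
    hS q (hsub hq) p hp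
end

section
/- Let T be a monotone operator on a Hilbert space H such that T + Id is surjective (for every v₀ ∈ H there exist x with v₀ - x ∈ T(x)). Then T is maximal monotone. -/
/- If (x, v) lies in a monotone extension of S, pick (z, x + v - z) ∈ S by surjectivity of
T + Id. Monotonicity of the extension gives 0 ≤ ⟪x - z, z - x⟫ = -‖x - z‖², so z = x and
(x, v) ∈ S already. -/

open scoped RealInnerProductSpace

theorem MonotoneSetH.fst_eq_of_add_eq {H : Type*} [NormedAddCommGroup H]
    [InnerProductSpace ℝ H] {S : Set (H × H)} (hS : MonotoneSetH S) {p q : H × H}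
    (hp : p ∈ S) (hq : q ∈ S) (hpq : p.1 + p.2 = q.1 + q.2) : p.1 = q.1 := by
  have hsnd : p.2 - q.2 = -(p.1 - q.1) := by
    rw [neg_sub, sub_eq_sub_iff_add_eq_add, add_comm p.2, hpq]
  have hle : 0 ≤ -‖p.1 - q.1‖ ^ 2 := by
    simpa only [hsnd, inner_neg_right, real_inner_self_eq_norm_sq] using hS p hp q hq
  have hzero : ‖p.1 - q.1‖ = 0 := by nlinarith [norm_nonneg (p.1 - q.1)]
  exact sub_eq_zero.mp (norm_eq_zero.mp hzero)

theorem stmt_16_general {H : Type*} [NormedAddCommGroup H] [InnerProductSpace ℝ H]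
    (S : Set (H × H)) (hmono : MonotoneSetH S)
    (hsurj : ∀ v₀ : H, ∃ x : H, (x, v₀ - x) ∈ S) :
    MaximalMonotoneSetH S := by
  refine ⟨hmono, fun S' hmono' hsub => (Set.Subset.antisymm · hsub) ?_⟩
  rintro ⟨x, v⟩ hxv
  obtain ⟨z, hz⟩ := hsurj (x + v)
  have hxz : x = z :=
    hmono'.fst_eq_of_add_eq hxv (hsub hz) (add_sub_cancel z (x + v)).symm
  subst hxz
  simpa only [add_sub_cancel_left] using hz

theorem stmt_16 {H : Type*} [NormedAddCommGroup H] [InnerProductSpace ℝ H] [CompleteSpace H]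
    (S : Set (H × H)) (hmono : MonotoneSetH S)
    (hsurj : ∀ v₀ : H, ∃ x : H, (x, v₀ - x) ∈ S) :
    MaximalMonotoneSetH S :=
  stmt_16_general S hmono hsurj
end
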